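/- arXiv:2307.00427 — 3 statements merged into one kernel-verified Lean document; each statement's English description precedes it below -/
import Mathlib

section
/- Let τ(f) = t̄(1 + ρ(f/f̄)^{1/μ}) for f ≥ 0 with constants t̄, f̄, ρ > 0 and μ > 0, and let σ(f) = ∫₀^f τ(z) dz. Then the convex conjugate of σ restricted to the domain f ≥ 0, namely σ*(t) = sup_{f ≥ 0} { t·f − σ(f) }, equals f̄ · ((t − t̄)/(t̄ρ))^μ · (t − t̄)/(1 + μ) for all t ≥ t̄. -/
open Real

/-- Conjugate of the Beckmann BPR link potential `σ(f) = ∫₀^f τ(z) dz`,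
where `τ(f) = t̄(1 + ρ(f/f̄)^{1/μ})`: for `t ≥ t̄`,
`sup_{f ≥ 0} { t·f − σ(f) } = f̄·((t−t̄)/(t̄ρ))^μ·(t−t̄)/(1+μ)`. -/
theorem stmt0 (tb fb ρ μ : ℝ) (htb : 0 < tb) (hfb : 0 < fb) (hρ : 0 < ρ) (hμ : 0 < μ)
    (τ σ : ℝ → ℝ)
    (hτ : ∀ z : ℝ, τ z = tb * (1 + ρ * (z / fb) ^ (1 / μ)))
    (hσ : ∀ f : ℝ, σ f = ∫ z in (0:ℝ)..f, τ z)
    (t : ℝ) (ht : tb ≤ t) :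
    IsLUB {x : ℝ | ∃ f : ℝ, 0 ≤ f ∧ x = t * f - σ f}
      (fb * ((t - tb) / (tb * ρ)) ^ μ * (t - tb) / (1 + μ)) := by
  have hμ1 : (0:ℝ) < 1/μ := by positivity
  have hp : (0:ℝ) < 1 + 1/μ := by linarith
  have hpne : (1:ℝ) + 1/μ ≠ 0 := hp.ne'
  set B : ℝ := fb ^ (1/μ) with hB
  have hBpos : 0 < B := Real.rpow_pos_of_pos hfb _
  set c : ℝ := tb * ρ / (B * (1 + 1/μ)) with hc
  have hcpos : 0 < c := by positivity
  -- explicit formula for σ on nonnegative reals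
  have hσ' : ∀ f : ℝ, 0 ≤ f → σ f = tb * f + c * (f * f ^ (1/μ)) := by
    intro f hf
    rw [hσ]
    have h1 : Set.EqOn τ (fun z => tb + (tb*ρ/B) * z ^ (1/μ)) (Set.uIcc (0:ℝ) f) := by
      intro z hz
      rw [Set.uIcc_of_le hf] at hz
      have hz0 : 0 ≤ z := hz.1
      rw [hτ, Real.div_rpow hz0 hfb.le]
      field_simp
      ring
    rw [intervalIntegral.integral_congr h1,
      intervalIntegral.integral_add intervalIntegrable_const
        ((intervalIntegral.intervalIntegrable_rpow (Or.inl hμ1.le)).const_mul _),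
      intervalIntegral.integral_const_mul, integral_rpow (Or.inl (by linarith)),
      intervalIntegral.integral_const]
    have h2 : f ^ (1/μ + 1) = f * f ^ (1/μ) := by
      rw [Real.rpow_add' hf (by positivity), Real.rpow_one]; ring
    rw [h2, Real.zero_rpow (by positivity : (1/μ+1) ≠ 0)]
    simp only [smul_eq_mul, sub_zero]
    rw [hc, ← div_div]
    ring
  set a : ℝ := t - tb with ha
  have ha0 : 0 ≤ a := by simp [ha]; linarith
  set X : ℝ := (a / (tb*ρ)) ^ μ with hX
  have hX0 : 0 ≤ X := Real.rpow_nonneg (by positivity) _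
  set F : ℝ := fb * X with hF
  have hF0 : 0 ≤ F := by positivity
  have hFu : F ^ (1/μ) = B * (a / (tb*ρ)) := by
    rw [hF, Real.mul_rpow hfb.le hX0, hX,
      ← Real.rpow_mul (by positivity : (0:ℝ) ≤ a/(tb*ρ)),
      mul_one_div_cancel hμ.ne', Real.rpow_one]
  have hv : c * F ^ (1/μ) * (1 + 1/μ) = a := by
    rw [hFu, hc]
    field_simp
  have hT : fb * X * a / (1 + μ) = a * F - c * (F * F ^ (1/μ)) := by
    rw [hFu, hF, hc]
    have h1μ : (1:ℝ) + μ ≠ 0 := by positivity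
    field_simp
    ring
  constructor
  · -- upper bound
    rintro x ⟨f, hf, rfl⟩
    rw [hσ' f hf, hT]
    have hgoal : t * f - (tb * f + c * (f * f ^ (1/μ))) = a * f - c * (f * f ^ (1/μ)) := by
      rw [ha]; ring
    rw [hgoal]
    rcases eq_or_lt_of_le ha0 with h0 | hA
    · -- a = 0
      have hX0' : X = 0 := by
        rw [hX, ← h0, zero_div, Real.zero_rpow hμ.ne']
      have hF' : F = 0 := by rw [hF, hX0', mul_zero]
      have hrhs : a * F - c * (F * F ^ (1/μ)) = 0 := by rw [hF', ← h0]; ring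
      rw [hrhs, ← h0]
      have h2 : 0 ≤ c * (f * f ^ (1/μ)) :=
        mul_nonneg hcpos.le (mul_nonneg hf (Real.rpow_nonneg hf _))
      linarith
    · -- 0 < a
      have hXpos : 0 < X := Real.rpow_pos_of_pos (by positivity) μ
      have hFpos : 0 < F := by rw [hF]; positivity
      have hvpos : 0 < F ^ (1/μ) := Real.rpow_pos_of_pos hFpos _
      have key := one_add_mul_self_le_rpow_one_add
        (s := f/F - 1) (by have h := div_nonneg hf hFpos.le; linarith)
        (le_add_of_nonneg_right hμ1.le : (1:ℝ) ≤ 1 + 1/μ)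
      have hsimp : 1 + (f/F - 1) = f/F := by ring
      rw [hsimp] at key
      have hdiv : (f/F) ^ (1+1/μ) = (f * f^(1/μ)) / (F * F^(1/μ)) := by
        rw [Real.div_rpow hf hFpos.le, Real.rpow_one_add' hf hpne,
          Real.rpow_one_add' hFpos.le hpne]
      rw [hdiv, le_div_iff₀ (by positivity)] at key
      have key2 : F * F^(1/μ) + (1+1/μ) * (F^(1/μ) * (f - F)) ≤ f * f^(1/μ) := by
        refine le_trans (le_of_eq ?_) key
        field_simp
      have key3 := mul_le_mul_of_nonneg_left key2 hcpos.le
      have hv' : a * (f - F) = c * ((1+1/μ) * (F^(1/μ) * (f-F))) := by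
        linear_combination (F - f) * hv
      nlinarith [key3, hv']
  · -- least upper bound: the value is attained at F
    intro b hb
    refine hb ⟨F, hF0, ?_⟩
    rw [hσ' F hF0, hT, ha]
    ring
end

section
/- Let Π(l, w) = { d ∈ ℝ_{≥0}^{n×n} : ∑_j d_{ij} = l_i, ∑_i d_{ij} = w_j } with l, w ≥ 0 and ∑_i l_i = ∑_j w_j = N > 0. For γ > 0 and costs T ∈ ℝ^{n×n}, the minimum over d ∈ Π(l,w) of ∑_{ij} d_{ij} T_{ij} + (1/γ) ∑_{ij} d_{ij} ln d_{ij} equals the maximum over λ^l, λ^w ∈ ℝ^n of −φ(λ^l, λ^w), where φ(λ^l, λ^w) = (N/γ) ln( (1/N) ∑_{ij} exp(−γ(T_{ij} + λ^l_i + λ^w_j)) ) + ∑_i λ^l_i l_i + ∑_j λ^w_j w_j. -/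
/-!
The cost is continuous on the compact transport polytope, so it has a minimiser `d`. Moving mass
`t` around a 4-cycle of cells keeps the marginals, and the tangent-line inequality for `x log x`
bounds the change of cost by `t` times a slope. Because `log t → -∞`, minimality forces `d > 0` on
the support `{l i > 0} × {w j > 0}`; there the slope along every 4-cycle vanishes, which makes
`T + (log d) / γ` a sum of a row and a column potential, i.e. `d i j = exp (-γ (T i j + a i + b j))`.
For these potentials the cost of `d` is `-(∑ a l + ∑ b w)`. Sending the potentials of the empty rows
and columns to `+∞` makes the dual objective converge to this value, and Gibbs' inequality gives
weak duality.
-/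

open Real Finset Filter Topology

namespace EntropicTransport

variable {ι κ : Type*}

section FourCycle

variable [DecidableEq ι] [DecidableEq κ]

def fourCycle (i i' : ι) (j j' : κ) : ι → κ → ℝ :=
  fun a b => (Pi.single i 1 - Pi.single i' 1 : ι → ℝ) a
    * (Pi.single j 1 - Pi.single j' 1 : κ → ℝ) b

lemma sum_single_sub_single_mul [Fintype ι] (i i' : ι) (X : ι → ℝ) :
    ∑ a, (Pi.single i 1 - Pi.single i' 1 : ι → ℝ) a * X a = X i - X i' := by
  simp [sub_mul, sum_sub_distrib, Pi.single_apply]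

lemma sum_fourCycle_left [Fintype ι] (i i' : ι) (j j' : κ) (b : κ) :
    ∑ a, fourCycle i i' j j' a b = 0 := by
  simp [fourCycle, ← sum_mul, sum_sub_distrib]

lemma sum_fourCycle_right [Fintype κ] (i i' : ι) (j j' : κ) (a : ι) :
    ∑ b, fourCycle i i' j j' a b = 0 := by
  simp [fourCycle, ← mul_sum, sum_sub_distrib]

lemma sum_sum_fourCycle_mul [Fintype ι] [Fintype κ] (i i' : ι) (j j' : κ) (h : ι → κ → ℝ) :
    ∑ a, ∑ b, fourCycle i i' j j' a b * h a b = h i j - h i j' - h i' j + h i' j' := by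
  simp only [fourCycle, mul_assoc, ← mul_sum, sum_single_sub_single_mul]
  ring

lemma eq_of_fourCycle_lt_zero {i i' a : ι} {j j' b : κ} (h : fourCycle i i' j j' a b < 0) :
    a = i ∧ b = j' ∨ a = i' ∧ b = j := by
  simp only [fourCycle, Pi.sub_apply, Pi.single_apply] at h
  split_ifs at h <;> norm_num at h <;> simp_all

end FourCycle

lemma sub_le_mul_log_sub_mul_log {x y : ℝ} (hx : 0 ≤ x) (hy : 0 < y) :
    x - y ≤ x * log x - x * log y := by
  rcases hx.eq_or_lt with rfl | hx
  · simpa using hy.le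
  · have h := mul_le_mul_of_nonneg_left (log_le_sub_one_of_pos (div_pos hy hx)) hx.le
    rw [log_div hy.ne' hx.ne', mul_sub_one, mul_div_cancel₀ _ hx.ne'] at h
    linarith

lemma neg_mul_log_sum_exp_le {α : Type*} [Fintype α] {N : ℝ} (hN : 0 < N) {p : α → ℝ}
    (hp : ∀ x, 0 ≤ p x) (hpN : ∑ x, p x = N) (c : α → ℝ) :
    -(N * log ((1 / N) * ∑ x, exp (-c x))) ≤ ∑ x, p x * c x + ∑ x, p x * log (p x) := by
  set Z := ∑ x, exp (-c x)
  have hZ : 0 < Z := sum_pos (fun x _ => exp_pos _) (nonempty_of_sum_ne_zero (hpN ▸ hN.ne'))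
  -- compare `p` with the Gibbs weights `q ∝ exp (-c)` of the same total mass
  set q : α → ℝ := fun x => N / Z * exp (-c x)
  have hq : ∀ x, 0 < q x := fun x => by positivity
  have hqN : ∑ x, q x = N := by rw [← mul_sum, div_mul_cancel₀ _ hZ.ne']
  have hlogq : ∀ x, log (q x) = log N - log Z - c x := fun x => by
    rw [log_mul (by positivity) (exp_pos _).ne', log_div hN.ne' hZ.ne', log_exp, ← sub_eq_add_neg]
  have key : ∑ x, (p x - q x) ≤ ∑ x, (p x * log (p x) - p x * log (q x)) :=
    sum_le_sum fun x _ => sub_le_mul_log_sub_mul_log (hp x) (hq x)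
  simp only [hlogq, sum_sub_distrib, hpN, hqN, mul_sub, ← sum_mul] at key
  rw [log_mul (by positivity) hZ.ne', one_div, log_inv]
  linarith

lemma exists_eq_add_of_cross_sum_eq {G : ι → κ → ℝ} {P : ι → Prop} {Q : κ → Prop}
    (h : ∀ i i' j j', P i → P i' → Q j → Q j' → G i j + G i' j' = G i j' + G i' j) :
    ∃ (α : ι → ℝ) (β : κ → ℝ), ∀ i j, P i → Q j → G i j = α i + β j := by
  by_cases hP : ∃ i₀, P i₀
  · by_cases hQ : ∃ j₀, Q j₀
    · obtain ⟨i₀, hi₀⟩ := hP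
      obtain ⟨j₀, hj₀⟩ := hQ
      exact ⟨fun i => G i j₀, fun j => G i₀ j - G i₀ j₀, fun i j hi hj => by
        linarith [h i i₀ j j₀ hi hi₀ hj hj₀]⟩
    · exact ⟨0, 0, fun _ j _ hj => (hQ ⟨j, hj⟩).elim⟩
  · exact ⟨0, 0, fun i _ hi _ => (hP ⟨i, hi⟩).elim⟩

variable [Fintype ι] [Fintype κ]

def transportPolytope (l : ι → ℝ) (w : κ → ℝ) : Set (ι → κ → ℝ) :=
  {d | (∀ i j, 0 ≤ d i j) ∧ (∀ i, ∑ j, d i j = l i) ∧ ∀ j, ∑ i, d i j = w j}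

noncomputable def entropicCost (γ : ℝ) (T d : ι → κ → ℝ) : ℝ :=
  ∑ i, ∑ j, d i j * T i j + (1 / γ) * ∑ i, ∑ j, d i j * log (d i j)

noncomputable def dualObjective (γ N : ℝ) (T : ι → κ → ℝ) (l : ι → ℝ) (w : κ → ℝ)
    (lamL : ι → ℝ) (lamW : κ → ℝ) : ℝ :=
  -((N / γ) * log ((1 / N) * ∑ i, ∑ j, exp (-γ * (T i j + lamL i + lamW j)))
    + ∑ i, lamL i * l i + ∑ j, lamW j * w j)

variable {γ N : ℝ} {T d : ι → κ → ℝ} {l : ι → ℝ} {w : κ → ℝ}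

lemma le_left_of_mem_transportPolytope (hd : d ∈ transportPolytope l w) (i : ι) (j : κ) :
    d i j ≤ l i :=
  hd.2.1 i ▸ single_le_sum (fun j' _ => hd.1 i j') (mem_univ j)

lemma le_right_of_mem_transportPolytope (hd : d ∈ transportPolytope l w) (i : ι) (j : κ) :
    d i j ≤ w j :=
  hd.2.2 j ▸ single_le_sum (fun i' _ => hd.1 i' j) (mem_univ i)

lemma transportPolytope_nonempty (hl : ∀ i, 0 ≤ l i) (hw : ∀ j, 0 ≤ w j) (hN : 0 < N)
    (hlN : ∑ i, l i = N) (hwN : ∑ j, w j = N) : (transportPolytope l w).Nonempty := by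
  refine ⟨fun i j => l i * w j / N, fun i j => by have := hl i; have := hw j; positivity, ?_, ?_⟩
  · intro i
    rw [← sum_div, ← mul_sum, hwN, mul_div_cancel_right₀ _ hN.ne']
  · intro j
    rw [← sum_div, ← sum_mul, hlN, mul_div_cancel_left₀ _ hN.ne']

lemma isCompact_transportPolytope : IsCompact (transportPolytope l w) := by
  refine isCompact_Icc.of_isClosed_subset ?_ fun d hd =>
    ⟨fun i j => hd.1 i j, fun i j => le_left_of_mem_transportPolytope hd i j⟩
  simp only [transportPolytope, Set.ofPred_and, Set.ofPred_forall]
  refine (isClosed_iInter fun i => isClosed_iInter fun j => isClosed_le ?_ ?_).inter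
    ((isClosed_iInter fun i => isClosed_eq ?_ ?_).inter
      (isClosed_iInter fun j => isClosed_eq ?_ ?_)) <;> fun_prop

lemma sum_sum_mul_add_add (hd : d ∈ transportPolytope l w) (T : ι → κ → ℝ) (a : ι → ℝ)
    (b : κ → ℝ) :
    ∑ i, ∑ j, d i j * (T i j + a i + b j)
      = ∑ i, ∑ j, d i j * T i j + ∑ i, a i * l i + ∑ j, b j * w j := by
  simp only [mul_add, sum_add_distrib, ← sum_mul, ← hd.2.1, ← hd.2.2]
  rw [sum_comm (f := fun i j => d i j * b j)]
  simp only [← sum_mul, mul_comm]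

lemma continuous_entropicCost (γ : ℝ) (T : ι → κ → ℝ) : Continuous (entropicCost γ T) := by
  have := continuous_mul_log
  unfold entropicCost
  fun_prop

lemma dualObjective_le_entropicCost (hγ : 0 < γ) (hN : 0 < N) (hlN : ∑ i, l i = N)
    (hd : d ∈ transportPolytope l w) (lamL : ι → ℝ) (lamW : κ → ℝ) :
    dualObjective γ N T l w lamL lamW ≤ entropicCost γ T d := by
  have hdN : ∑ x : ι × κ, d x.1 x.2 = N := by
    simp only [Fintype.sum_prod_type, hd.2.1, hlN]
  have h := neg_mul_log_sum_exp_le hN (fun x : ι × κ => hd.1 x.1 x.2) hdN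
    (fun x : ι × κ => γ * (T x.1 x.2 + lamL x.1 + lamW x.2))
  simp only [Fintype.sum_prod_type, ← neg_mul, mul_left_comm _ γ, ← mul_sum,
    sum_sum_mul_add_add hd] at h
  unfold dualObjective entropicCost
  rw [← mul_le_mul_iff_of_pos_left hγ]
  have hγN : γ * (N / γ) = N := mul_div_cancel₀ N hγ.ne'
  have hγ1 : γ * (1 / γ) = 1 := mul_one_div_cancel hγ.ne'
  linear_combination h - log (1 / N * ∑ i, ∑ j, exp (-γ * (T i j + lamL i + lamW j))) * hγN
    - (∑ i, ∑ j, d i j * log (d i j)) * hγ1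

lemma entropicCost_add_mul_sub_le (hγ : 0 ≤ γ) (T : ι → κ → ℝ) {E : ι → κ → ℝ}
    (hd : ∀ a b, 0 ≤ d a b) {t : ℝ} (hE : ∀ a b, E a b ≠ 0 → 0 < d a b + t * E a b) :
    entropicCost γ T (fun a b => d a b + t * E a b) - entropicCost γ T d
      ≤ t * ∑ a, ∑ b, E a b * (T a b + (log (d a b + t * E a b) + 1) / γ) := by
  unfold entropicCost
  simp only [mul_sum, ← sum_add_distrib, ← sum_sub_distrib]
  refine sum_le_sum fun a _ => sum_le_sum fun b _ => ?_
  by_cases h0 : E a b = 0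
  · simp [h0]
  -- tangent line of `x ↦ x log x` at the perturbed point
  have h := mul_le_mul_of_nonneg_left
    (sub_le_mul_log_sub_mul_log (hd a b) (hE a b h0)) (one_div_nonneg.2 hγ)
  rw [div_eq_mul_one_div _ γ]
  linear_combination h

lemma eventually_pos_add_mul {E : ι → κ → ℝ} (hd : ∀ a b, 0 ≤ d a b)
    (hneg : ∀ a b, E a b < 0 → 0 < d a b) :
    ∀ᶠ t in 𝓝[>] 0, ∀ a b, E a b ≠ 0 → 0 < d a b + t * E a b := by
  simp only [eventually_all]
  intro a b hE0
  rcases (hd a b).eq_or_lt with h | h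
  · have hE : 0 < E a b := (not_lt.1 fun hE => (hneg a b hE).ne h).lt_of_ne' hE0
    filter_upwards [self_mem_nhdsWithin] with t (ht : 0 < t)
    rw [← h, zero_add]
    exact mul_pos ht hE
  · have : Tendsto (fun t => d a b + t * E a b) (𝓝[>] 0) (𝓝 (d a b)) := by
      refine tendsto_nhdsWithin_of_tendsto_nhds ?_
      simpa using ((continuous_mul_const (E a b)).const_add (d a b)).tendsto 0
    exact this.eventually_const_lt h

lemma eventually_nonneg_slope_of_isMinOn (hγ : 0 ≤ γ) (hd : d ∈ transportPolytope l w)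
    (hmin : IsMinOn (entropicCost γ T) (transportPolytope l w) d) {E : ι → κ → ℝ}
    (hrow : ∀ a, ∑ b, E a b = 0) (hcol : ∀ b, ∑ a, E a b = 0)
    (hneg : ∀ a b, E a b < 0 → 0 < d a b) :
    ∀ᶠ t in 𝓝[>] 0, 0 ≤ ∑ a, ∑ b, E a b * (T a b + (log (d a b + t * E a b) + 1) / γ) := by
  filter_upwards [eventually_pos_add_mul hd.1 hneg, self_mem_nhdsWithin] with t hpos (ht : 0 < t)
  have hmem : (fun a b => d a b + t * E a b) ∈ transportPolytope l w := by
    refine ⟨fun a b => ?_, fun a => ?_, fun b => ?_⟩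
    · by_cases h : E a b = 0
      · simpa [h] using hd.1 a b
      · exact (hpos a b h).le
    · simp [sum_add_distrib, ← mul_sum, hrow, hd.2.1]
    · simp [sum_add_distrib, ← mul_sum, hcol, hd.2.2]
  have hle := isMinOn_iff.1 hmin _ hmem
  have hslope := entropicCost_add_mul_sub_le hγ T hd.1 hpos
  exact (mul_nonneg_iff_of_pos_left ht).1 (by linarith)

lemma add_eq_add_of_isMinOn (hγ : 0 < γ) (hd : d ∈ transportPolytope l w)
    (hmin : IsMinOn (entropicCost γ T) (transportPolytope l w) d) {i i' : ι} {j j' : κ}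
    (hij : 0 < d i j) (hij' : 0 < d i j') (hi'j : 0 < d i' j) (hi'j' : 0 < d i' j') :
    T i j + log (d i j) / γ + (T i' j' + log (d i' j') / γ)
      = T i j' + log (d i j') / γ + (T i' j + log (d i' j) / γ) := by
  classical
  have key : ∀ {j j' : κ}, 0 < d i j → 0 < d i j' → 0 < d i' j → 0 < d i' j' →
      T i j' + log (d i j') / γ + (T i' j + log (d i' j) / γ)
        ≤ T i j + log (d i j) / γ + (T i' j' + log (d i' j') / γ) := by
    intro j j' hij hij' hi'j hi'j'
    have hslope := eventually_nonneg_slope_of_isMinOn hγ.le hd hmin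
      (sum_fourCycle_right i i' j j') (sum_fourCycle_left i i' j j') fun a b hab => by
        rcases eq_of_fourCycle_lt_zero hab with ⟨rfl, rfl⟩ | ⟨rfl, rfl⟩ <;> assumption
    simp only [sum_sum_fourCycle_mul] at hslope
    have h0 := ge_of_tendsto (tendsto_nhdsWithin_of_tendsto_nhds
      (ContinuousAt.tendsto (by fun_prop (disch := simp [*, ne_of_gt])))) hslope
    simp only [zero_mul, add_zero, add_div] at h0
    linarith
  exact le_antisymm (key hij' hij hi'j' hi'j) (key hij hij' hi'j hi'j')

lemma pos_of_isMinOn (hγ : 0 < γ) (hd : d ∈ transportPolytope l w)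
    (hmin : IsMinOn (entropicCost γ T) (transportPolytope l w) d) {i : ι} {j : κ}
    (hi : 0 < l i) (hj : 0 < w j) : 0 < d i j := by
  classical
  refine (hd.1 i j).lt_of_ne' fun hij => ?_
  obtain ⟨j', -, hij'⟩ : ∃ j' ∈ univ, 0 < d i j' :=
    exists_lt_of_sum_lt (f := 0) (by simpa [hd.2.1 i] using hi)
  obtain ⟨i', -, hi'j⟩ : ∃ i' ∈ univ, 0 < d i' j :=
    exists_lt_of_sum_lt (f := 0) (g := fun a => d a j) (by simpa [hd.2.2 j] using hj)
  have hii' : i ≠ i' := fun h => by subst h; simp [hij] at hi'j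
  have hjj' : j ≠ j' := fun h => by subst h; simp [hij] at hij'
  have hslope := eventually_nonneg_slope_of_isMinOn hγ.le hd hmin
    (sum_fourCycle_right i i' j j') (sum_fourCycle_left i i' j j') fun a b hab => by
      rcases eq_of_fourCycle_lt_zero hab with ⟨rfl, rfl⟩ | ⟨rfl, rfl⟩ <;> assumption
  simp only [sum_sum_fourCycle_mul] at hslope
  simp only [hij, fourCycle, Pi.sub_apply, Pi.single_eq_same, ne_eq, hii', not_false_eq_true,
    Pi.single_eq_of_ne, sub_zero, hjj', mul_one, zero_add, hjj'.symm, zero_sub, mul_neg,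
    ← sub_eq_add_neg, hii'.symm, neg_neg] at hslope
  -- `log t → -∞` dominates the slope, since the other three entries stay bounded
  have hU : Tendsto (fun t => T i j - T i j' - T i' j + T i' j'
      + (d i' j' + t - log (d i j' - t) - log (d i' j - t)) / γ + log t / γ) (𝓝[>] 0) atBot :=
    Tendsto.add_atBot (tendsto_nhdsWithin_of_tendsto_nhds (ContinuousAt.tendsto
      (by fun_prop (disch := simp [*, ne_of_gt])))) (tendsto_log_nhdsGT_zero.atBot_div_const hγ)
  obtain ⟨t, hSt, hUt, ht⟩ :=
    (hslope.and ((hU.eventually (eventually_lt_atBot 0)).and self_mem_nhdsWithin)).exists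
  have hlog : log (d i' j' + t) / γ ≤ (d i' j' + t) / γ :=
    div_le_div_of_nonneg_right (log_le_self (add_nonneg (hd.1 i' j') (le_of_lt ht))) hγ.le
  simp only [add_div, sub_div] at hSt hUt hlog
  linarith

lemma exists_eq_exp_of_isMinOn (hγ : 0 < γ) (hd : d ∈ transportPolytope l w)
    (hmin : IsMinOn (entropicCost γ T) (transportPolytope l w) d) :
    ∃ (a : ι → ℝ) (b : κ → ℝ),
      ∀ i j, 0 < l i → 0 < w j → d i j = exp (-γ * (T i j + a i + b j)) := by
  have hpos := fun {i} {j} => pos_of_isMinOn (i := i) (j := j) hγ hd hmin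
  obtain ⟨α, β, hαβ⟩ := exists_eq_add_of_cross_sum_eq (G := fun i j => T i j + log (d i j) / γ)
    (P := fun i => 0 < l i) (Q := fun j => 0 < w j) fun i i' j j' hi hi' hj hj' =>
      add_eq_add_of_isMinOn hγ hd hmin (hpos hi hj) (hpos hi hj') (hpos hi' hj) (hpos hi' hj')
  refine ⟨-α, -β, fun i j hi hj => ?_⟩
  have h := hαβ i j hi hj
  rw [← exp_log (hpos hi hj)]
  congr 1
  field_simp at h
  simp only [Pi.neg_apply]
  linarith

lemma entropicCost_eq_of_eq_exp (hγ : γ ≠ 0) (hd : d ∈ transportPolytope l w)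
    {a : ι → ℝ} {b : κ → ℝ}
    (hexp : ∀ i j, 0 < l i → 0 < w j → d i j = exp (-γ * (T i j + a i + b j))) :
    entropicCost γ T d = -(∑ i, a i * l i + ∑ j, b j * w j) := by
  have hcell : ∀ i j, d i j * log (d i j) = -γ * (d i j * (T i j + a i + b j)) := by
    intro i j
    rcases (hd.1 i j).eq_or_lt with h | h
    · simp [← h]
    · rw [hexp i j (h.trans_le (le_left_of_mem_transportPolytope hd i j))
        (h.trans_le (le_right_of_mem_transportPolytope hd i j)), log_exp]
      ring
  unfold entropicCost
  simp only [hcell, ← mul_sum, sum_sum_mul_add_add hd]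
  field_simp
  ring

lemma tendsto_exp_add_ite (hγ : 0 < γ) (hd : d ∈ transportPolytope l w) {a : ι → ℝ} {b : κ → ℝ}
    (hexp : ∀ i j, 0 < l i → 0 < w j → d i j = exp (-γ * (T i j + a i + b j))) (i : ι) (j : κ) :
    Tendsto (fun M => exp (-γ * (T i j + (a i + if 0 < l i then 0 else M)
      + (b j + if 0 < w j then 0 else M)))) atTop (𝓝 (d i j)) := by
  by_cases hij : 0 < l i ∧ 0 < w j
  · simp only [hij.1, hij.2, if_true, add_zero]
    rw [hexp i j hij.1 hij.2]
    exact tendsto_const_nhds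
  have hd0 : d i j = 0 := by
    rcases not_and_or.1 hij with h | h
    · exact le_antisymm ((le_left_of_mem_transportPolytope hd i j).trans (not_lt.1 h)) (hd.1 i j)
    · exact le_antisymm ((le_right_of_mem_transportPolytope hd i j).trans (not_lt.1 h)) (hd.1 i j)
  rw [hd0]
  refine tendsto_exp_atBot.comp (Tendsto.const_mul_atTop_of_neg (neg_lt_zero.2 hγ) ?_)
  refine tendsto_atTop_mono' atTop ((eventually_ge_atTop 0).mono fun M hM => ?_)
    (tendsto_atTop_add_const_left atTop (T i j + a i + b j) tendsto_id)
  show T i j + a i + b j + M ≤ _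
  split_ifs with h1 h2
  exacts [absurd ⟨h1, h2⟩ hij, by linarith, by linarith, by linarith]

lemma tendsto_dualObjective (hγ : 0 < γ) (hN : 0 < N) (hl : ∀ i, 0 ≤ l i) (hw : ∀ j, 0 ≤ w j)
    (hlN : ∑ i, l i = N) (hd : d ∈ transportPolytope l w) {a : ι → ℝ} {b : κ → ℝ}
    (hexp : ∀ i j, 0 < l i → 0 < w j → d i j = exp (-γ * (T i j + a i + b j))) :
    Tendsto (fun M => dualObjective γ N T l w (fun i => a i + if 0 < l i then 0 else M)
        (fun j => b j + if 0 < w j then 0 else M)) atTop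
      (𝓝 (-(∑ i, a i * l i + ∑ j, b j * w j))) := by
  have hZ : Tendsto (fun M => ∑ i, ∑ j, exp (-γ * (T i j + (a i + if 0 < l i then 0 else M)
      + (b j + if 0 < w j then 0 else M)))) atTop (𝓝 N) := by
    have hdN : N = ∑ i, ∑ j, d i j := by simp only [hd.2.1, hlN]
    rw [hdN]
    exact tendsto_finsetSum _ fun i _ => tendsto_finsetSum _ fun j _ =>
      tendsto_exp_add_ite hγ hd hexp i j
  have hL : ∀ M, ∑ i, (a i + if 0 < l i then 0 else M) * l i = ∑ i, a i * l i := fun M =>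
    sum_congr rfl fun i _ => (hl i).lt_or_eq.elim (fun h => by simp [h]) fun h => by simp [← h]
  have hW : ∀ M, ∑ j, (b j + if 0 < w j then 0 else M) * w j = ∑ j, b j * w j := fun M =>
    sum_congr rfl fun j _ => (hw j).lt_or_eq.elim (fun h => by simp [h]) fun h => by simp [← h]
  unfold dualObjective
  simp only [hL, hW]
  convert ((((hZ.const_mul (1 / N)).log (by positivity)).const_mul (N / γ)).add_const
    (∑ i, a i * l i)).add_const (∑ j, b j * w j) |>.neg using 2
  simp [hN.ne']

end EntropicTransport

open EntropicTransport

theorem stmt3_general (n : ℕ) (γ : ℝ) (hγ : 0 < γ)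
    (l w : Fin n → ℝ) (hl : ∀ i, 0 ≤ l i) (hw : ∀ j, 0 ≤ w j)
    (N : ℝ) (hN : 0 < N) (hlN : ∑ i, l i = N) (hwN : ∑ j, w j = N)
    (T : Fin n → Fin n → ℝ) :
    sInf {v : ℝ | ∃ d : Fin n → Fin n → ℝ, (∀ i j, 0 ≤ d i j) ∧
        (∀ i, ∑ j, d i j = l i) ∧ (∀ j, ∑ i, d i j = w j) ∧
        v = ∑ i, ∑ j, d i j * T i j + (1 / γ) * ∑ i, ∑ j, d i j * Real.log (d i j)}
    = sSup {v : ℝ | ∃ lamL lamW : Fin n → ℝ,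
        v = -((N / γ) * Real.log ((1 / N) *
              ∑ i, ∑ j, Real.exp (-γ * (T i j + lamL i + lamW j)))
            + ∑ i, lamL i * l i + ∑ j, lamW j * w j)} := by
  obtain ⟨d, hd, hmin⟩ := isCompact_transportPolytope.exists_isMinOn
    (transportPolytope_nonempty hl hw hN hlN hwN) (continuous_entropicCost γ T).continuousOn
  obtain ⟨a, b, hexp⟩ := exists_eq_exp_of_isMinOn hγ hd hmin
  refine (IsLeast.csInf_eq (a := entropicCost γ T d) ?_).trans (IsLUB.csSup_eq ?_ ?_).symm
  · refine ⟨⟨d, hd.1, hd.2.1, hd.2.2, rfl⟩, ?_⟩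
    rintro _ ⟨e, he0, herow, hecol, rfl⟩
    exact isMinOn_iff.1 hmin e ⟨he0, herow, hecol⟩
  · refine ⟨?_, fun u hu => ?_⟩
    · rintro _ ⟨lamL, lamW, rfl⟩
      exact dualObjective_le_entropicCost hγ hN hlN hd lamL lamW
    · rw [entropicCost_eq_of_eq_exp hγ.ne' hd hexp]
      exact le_of_tendsto' (tendsto_dualObjective hγ hN hl hw hlN hd hexp) fun M => hu ⟨_, _, rfl⟩
  · exact ⟨_, 0, 0, rfl⟩

/-- Strong duality for the entropy-regularized trip distribution (optimal transport)
problem with a tautological normalization constraint. -/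
theorem stmt3 (n : ℕ) (hn : 0 < n) (γ : ℝ) (hγ : 0 < γ)
    (l w : Fin n → ℝ) (hl : ∀ i, 0 ≤ l i) (hw : ∀ j, 0 ≤ w j)
    (N : ℝ) (hN : 0 < N) (hlN : ∑ i, l i = N) (hwN : ∑ j, w j = N)
    (T : Fin n → Fin n → ℝ) :
    sInf {v : ℝ | ∃ d : Fin n → Fin n → ℝ, (∀ i j, 0 ≤ d i j) ∧
        (∀ i, ∑ j, d i j = l i) ∧ (∀ j, ∑ i, d i j = w j) ∧
        v = ∑ i, ∑ j, d i j * T i j + (1 / γ) * ∑ i, ∑ j, d i j * Real.log (d i j)}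
    = sSup {v : ℝ | ∃ lamL lamW : Fin n → ℝ,
        v = -((N / γ) * Real.log ((1 / N) *
              ∑ i, ∑ j, Real.exp (-γ * (T i j + lamL i + lamW j)))
            + ∑ i, lamL i * l i + ∑ j, lamW j * w j)} :=
  stmt3_general n γ hγ l w hl hw N hN hlN hwN T
end

section
/- Consider minimizing Φ(t) + h(t) over dom h, with h convex and Φ convex, using USTM with a (δ_k, 0)-inexact first-order oracle at step k satisfying Φ̃(t') + δ_k ≥ Φ(t') ≥ Φ̃(t) + ⟨∇̃Φ(t), t' − t⟩ for all t, t' ∈ dom h, with δ_k = α_{k+1} ε / (4 A_{k+1}), and inner stopping criterion Φ̃(t^{k+1}) ≤ Φ̃(y^{k+1}) + ⟨∇̃Φ(y^{k+1}), t^{k+1} − y^{k+1}⟩ + (L_{k+1}/2)‖t^{k+1} − y^{k+1}‖² + (α_{k+1}/(2A_{k+1}))ε. Then for every k > 0 and every t ∈ dom h: Φ(t^k) + h(t^k) ≤ (1/A_k)φ_k(t) − (1/(2A_k))‖t − u^k‖² + 3ε/4, where φ_k is the model function φ₀(t) = ½‖t − t⁰‖², φ_{k+1}(t) = φ_k(t)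 + α_{k+1}[Φ̃(y^{k+1}) + ⟨∇̃Φ(y^{k+1}), t − y^{k+1}⟩ + h(t)]. -/
/-!
The model functions `φ k` are `1`-strongly convex on `D` (`½‖· - t⁰‖²` plus nonnegative multiples
of convex functions), so their minimisers satisfy `φ k (u k) + ½‖t - u k‖² ≤ φ k t`. It therefore
suffices to prove the invariant `A k (Φ + h)(t k) ≤ φ k (u k) + 3εA k/4` by induction. In the step,
convexity of `h`, the two oracle inequalities and the stopping rule bound `A (k+1) (Φ + h)(t (k+1))`
by `A k (Φ + h)(t k)`, the new linear-model term at `u (k+1)`, the errors `3εα (k+1)/4`, and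
`½‖u (k+1) - u k‖²`: since `t (k+1) - y (k+1) = (α (k+1) / A (k+1)) (u (k+1) - u k)`, the choice
`L (k+1) α (k+1)² = A (k+1)` makes the quadratic term of the stopping rule exactly this, and strong
convexity of `φ k` at its minimiser `u k` absorbs it.
-/

open Real Filter Topology
open scoped RealInnerProductSpace

section

variable {E : Type*} [NormedAddCommGroup E] [InnerProductSpace ℝ E] {s : Set E}

lemma StrongConvexOn.add_convexOn {m : ℝ} {f g : E → ℝ} (hf : StrongConvexOn s m f)
    (hg : ConvexOn ℝ s g) : StrongConvexOn s m (f + g) := by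
  simpa [StrongConvexOn] using hf.add hg.uniformConvexOn_zero

lemma convexOn_const_add_inner_sub (hs : Convex ℝ s) (c : ℝ) (v y : E) :
    ConvexOn ℝ s fun x ↦ c + ⟪v, x - y⟫ := by
  refine ⟨hs, fun x _ z _ a b _ _ hab ↦ le_of_eq ?_⟩
  simp only [smul_eq_mul, inner_sub_right, inner_add_right, real_inner_smul_right]
  linear_combination (⟪v, y⟫ - c) * hab

lemma strongConvexOn_half_sq_norm_sub (hs : Convex ℝ s) (c : E) :
    StrongConvexOn s 1 fun x ↦ 1 / 2 * ‖x - c‖ ^ 2 := by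
  rw [strongConvexOn_iff_convex]
  convert convexOn_const_add_inner_sub hs (1 / 2 * ‖c‖ ^ 2) (-c) 0 using 2 with x
  rw [norm_sub_sq_real, sub_zero, inner_neg_left, real_inner_comm]
  ring

lemma StrongConvexOn.add_sq_le_of_isMinOn {m : ℝ} {f : E → ℝ} {u x : E}
    (hf : StrongConvexOn s m f) (hmin : IsMinOn f s u) (hu : u ∈ s) (hx : x ∈ s) :
    f u + m / 2 * ‖x - u‖ ^ 2 ≤ f x := by
  have hsegment : ∀ l ∈ Set.Ioo (0 : ℝ) 1, f u + (1 - l) * (m / 2 * ‖x - u‖ ^ 2) ≤ f x := by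
    rintro l ⟨hl0, hl1⟩
    have hcomb := hf.2 hx hu hl0.le (sub_nonneg.2 hl1.le) (add_sub_cancel l 1)
    have hle : f u ≤ f (l • x + (1 - l) • u) :=
      isMinOn_iff.mp hmin _ (hf.1 hx hu hl0.le (sub_nonneg.2 hl1.le) (add_sub_cancel l 1))
    simp only [smul_eq_mul] at hcomb
    refine le_of_mul_le_mul_left ?_ hl0
    linear_combination hle + hcomb
  have hlim : Tendsto (fun l : ℝ ↦ f u + (1 - l) * (m / 2 * ‖x - u‖ ^ 2)) (𝓝[>] 0)
      (𝓝 (f u + (1 - 0) * (m / 2 * ‖x - u‖ ^ 2))) :=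
    ((continuous_const.add ((continuous_const.sub continuous_id).mul continuous_const)).tendsto
      0).mono_left nhdsWithin_le_nhds
  simpa using le_of_tendsto hlim (eventually_of_mem (Ioo_mem_nhdsGT one_pos) hsegment)

lemma ConvexOn.mul_le_of_eq_smul {f : E → ℝ} (hf : ConvexOn ℝ s f) {x y z : E} {a b : ℝ}
    (hx : x ∈ s) (hy : y ∈ s) (ha : 0 ≤ a) (hb : 0 ≤ b) (hab : 0 < a + b)
    (hz : z = (a + b)⁻¹ • (a • x + b • y)) :
    (a + b) * f z ≤ a * f x + b * f y := by
  have hcomb := hf.2 hx hy (div_nonneg ha hab.le) (div_nonneg hb hab.le) (by field_simp)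
  rw [smul_add, smul_smul, smul_smul, inv_mul_eq_div, inv_mul_eq_div] at hz
  rw [← hz, smul_eq_mul, smul_eq_mul] at hcomb
  calc (a + b) * f z ≤ (a + b) * (a / (a + b) * f x + b / (a + b) * f y) := by gcongr
    _ = a * f x + b * f y := by field_simp

lemma mul_half_sq_norm_eq_of_smul_eq {a A' L : ℝ} {v w : E} (ha : 0 < a) (hA' : 0 < A')
    (hL : L * a ^ 2 = A') (hvw : A' • v = a • w) :
    A' * (L / 2 * ‖v‖ ^ 2) = 1 / 2 * ‖w‖ ^ 2 := by
  have hnorm : A' ^ 2 * ‖v‖ ^ 2 = a ^ 2 * ‖w‖ ^ 2 := by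
    have := congrArg (‖·‖ ^ 2) hvw
    simp only [norm_smul, norm_of_nonneg hA'.le, norm_of_nonneg ha.le, mul_pow] at this
    exact this
  refine mul_left_cancel₀ hA'.ne' ?_
  linear_combination (L / 2) * hnorm + (‖w‖ ^ 2 / 2) * hL

lemma ustm_step_objective_le {D : Set E} {h Φ Φt : E → ℝ} {g : E → E} (hh : ConvexOn ℝ D h)
    {a A A' L ε : ℝ} {u u' tk y t' : E} (ha : 0 < a) (hA : 0 ≤ A) (hA' : A' = A + a)
    (hL : L * a ^ 2 = A') (hu' : u' ∈ D) (htk : tk ∈ D)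
    (hy : y = A'⁻¹ • (a • u + A • tk)) (ht' : t' = A'⁻¹ • (a • u' + A • tk))
    (hlower : Φt y + ⟪g y, tk - y⟫ ≤ Φ tk)
    (hupper : Φ t' ≤ Φt t' + a * ε / (4 * A'))
    (hstop : Φt t' ≤ Φt y + ⟪g y, t' - y⟫ + L / 2 * ‖t' - y‖ ^ 2 + a / (2 * A') * ε) :
    A' * (Φ t' + h t') ≤
      A * (Φ tk + h tk) + a * (Φt y + ⟪g y, u' - y⟫ + h u') + 1 / 2 * ‖u' - u‖ ^ 2 +
        3 * ε / 4 * a := by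
  have hA'pos : 0 < A' := by linarith
  have hy' : A' • y = a • u + A • tk := by rw [hy, smul_inv_smul₀ hA'pos.ne']
  have ht'' : A' • t' = a • u' + A • tk := by rw [ht', smul_inv_smul₀ hA'pos.ne']
  have hstep : A' • (t' - y) = a • (u' - u) := by
    rw [smul_sub, hy', ht'', smul_sub]; abel
  have hsplit : A' • (t' - y) = A • (tk - y) + a • (u' - y) := by
    rw [smul_sub, ht'', hA', add_smul, smul_sub, smul_sub]; abel
  have hinner : A' * ⟪g y, t' - y⟫ = A * ⟪g y, tk - y⟫ + a * ⟪g y, u' - y⟫ := by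
    rw [← real_inner_smul_right, hsplit, inner_add_right, real_inner_smul_right,
      real_inner_smul_right]
  have hquad : A' * (L / 2 * ‖t' - y‖ ^ 2) = 1 / 2 * ‖u' - u‖ ^ 2 :=
    mul_half_sq_norm_eq_of_smul_eq ha hA'pos hL hstep
  have hconv : (a + A) * h t' ≤ a * h u' + A * h tk :=
    hh.mul_le_of_eq_smul hu' htk ha.le hA (by linarith) (by rwa [add_comm, ← hA'])
  have hupper' : A' * Φ t' ≤ A' * Φt t' + a * ε / 4 := by
    calc A' * Φ t' ≤ A' * (Φt t' + a * ε / (4 * A')) := by gcongr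
      _ = A' * Φt t' + a * ε / 4 := by field_simp
  have hstop' : A' * Φt t' ≤ A' * Φt y + A' * ⟪g y, t' - y⟫ + A' * (L / 2 * ‖t' - y‖ ^ 2) +
      a * ε / 2 := by
    calc A' * Φt t' ≤ A' * (Φt y + ⟪g y, t' - y⟫ + L / 2 * ‖t' - y‖ ^ 2 + a / (2 * A') * ε) := by
          gcongr
      _ = _ := by field_simp
  have hlower' : A * (Φt y + ⟪g y, tk - y⟫) ≤ A * Φ tk := by gcongr
  subst hA'
  linear_combination hupper' + hstop' + hlower' + hconv + hinner + hquad

end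

theorem stmt8_general {E : Type*} [NormedAddCommGroup E] [InnerProductSpace ℝ E]
    (D : Set E) (h : E → ℝ) (hh : ConvexOn ℝ D h)
    (Φ : E → ℝ)
    (ε : ℝ)
    (Φt : E → ℝ) (g : E → E)  -- inexact oracle Φ̃, ∇̃Φ
    (α A L : ℕ → ℝ) (tseq useq yseq : ℕ → E) (t0 : E)
    (φ : ℕ → E → ℝ)
    (hA0 : A 0 = 0) (hAs : ∀ k, A (k + 1) = A k + α (k + 1))
    (hαpos : ∀ k, 0 < α (k + 1))
    (hαL : ∀ k, L (k + 1) * α (k + 1) ^ 2 = A (k + 1))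
    (ht0 : tseq 0 = t0) (hu0 : useq 0 = t0)
    (hφ0 : ∀ t, φ 0 t = (1 / 2) * ‖t - t0‖ ^ 2)
    (hφs : ∀ k t, φ (k + 1) t = φ k t +
        α (k + 1) * (Φt (yseq (k + 1)) +
          (inner ℝ (g (yseq (k + 1))) (t - yseq (k + 1)) : ℝ) + h t))
    (hy : ∀ k, yseq (k + 1) = (A (k + 1))⁻¹ • (α (k + 1) • useq k + A k • tseq k))
    (ht : ∀ k, tseq (k + 1) = (A (k + 1))⁻¹ • (α (k + 1) • useq (k + 1) + A k • tseq k))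
    (hu : ∀ k, useq (k + 1) ∈ D ∧ ∀ t ∈ D, φ (k + 1) (useq (k + 1)) ≤ φ (k + 1) t)
    -- (δₖ,0)-inexact oracle with δₖ = α_{k+1} ε / (4 A_{k+1})
    (horacle : ∀ k, ∀ t ∈ D, ∀ t' ∈ D,
        Φ t' ≤ Φt t' + α (k + 1) * ε / (4 * A (k + 1)) ∧
        Φt t + (inner ℝ (g t) (t' - t) : ℝ) ≤ Φ t')
    -- inner stopping criterion
    (hstop : ∀ k, Φt (tseq (k + 1)) ≤ Φt (yseq (k + 1)) +
        (inner ℝ (g (yseq (k + 1))) (tseq (k + 1) - yseq (k + 1)) : ℝ) +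
        L (k + 1) / 2 * ‖tseq (k + 1) - yseq (k + 1)‖ ^ 2 +
        α (k + 1) / (2 * A (k + 1)) * ε)
    (htD : ∀ k, tseq k ∈ D) (hyD : ∀ k, yseq (k + 1) ∈ D) :
    ∀ k : ℕ, 0 < k → ∀ t ∈ D,
      Φ (tseq k) + h (tseq k) ≤
        (1 / A k) * φ k t - (1 / (2 * A k)) * ‖t - useq k‖ ^ 2 + 3 * ε / 4 := by
  have hA_nonneg : ∀ k, 0 ≤ A k := fun k ↦ by
    induction k with
    | zero => exact hA0.ge
    | succ n ih => linarith [hAs n, hαpos n]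
  have huD : ∀ k, useq k ∈ D
    | 0 => hu0 ▸ ht0 ▸ htD 0
    | n + 1 => (hu n).1
  have hφ_strong : ∀ k, StrongConvexOn D 1 (φ k) := fun k ↦ by
    induction k with
    | zero => simpa only [funext hφ0] using strongConvexOn_half_sq_norm_sub hh.1 t0
    | succ n ih =>
      rw [funext (hφs n)]
      exact ih.add_convexOn (((convexOn_const_add_inner_sub hh.1 _ _ _).add hh).smul
        (hαpos n).le)
  have hφ_min : ∀ k, IsMinOn (φ k) D (useq k)
    | 0 => isMinOn_iff.mpr fun t _ ↦ by simp [hφ0, hu0]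
    | n + 1 => isMinOn_iff.mpr (hu n).2
  have hgrowth : ∀ k, ∀ t ∈ D, φ k (useq k) + 1 / 2 * ‖t - useq k‖ ^ 2 ≤ φ k t := fun k t ht ↦
    (hφ_strong k).add_sq_le_of_isMinOn (hφ_min k) (huD k) ht
  have key : ∀ k, A k * (Φ (tseq k) + h (tseq k)) ≤ φ k (useq k) + 3 * ε / 4 * A k := fun k ↦ by
    induction k with
    | zero => simp [hA0, hφ0]
    | succ n ih =>
      have hstep := ustm_step_objective_le hh (hαpos n) (hA_nonneg n) (hAs n) (hαL n)
        (huD (n + 1)) (htD n) (hy n) (ht n) ((horacle n _ (hyD n) _ (htD n)).2)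
        ((horacle n _ (htD (n + 1)) _ (htD (n + 1))).1) (hstop n)
      rw [hφs]
      linear_combination hstep + ih + hgrowth n _ (huD (n + 1)) - 3 * ε / 4 * hAs n
  intro k hk t ht
  have hApos : 0 < A k := by
    obtain ⟨n, rfl⟩ : ∃ n, k = n + 1 := ⟨k - 1, by omega⟩
    linarith [hAs n, hA_nonneg n, hαpos n]
  have hrhs : 1 / A k * φ k t - 1 / (2 * A k) * ‖t - useq k‖ ^ 2 + 3 * ε / 4 =
      (φ k t - 1 / 2 * ‖t - useq k‖ ^ 2 + 3 * ε / 4 * A k) / A k := by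
    field_simp
  rw [hrhs, le_div_iff₀ hApos]
  linarith [key k, hgrowth k t ht]

/-- Key bound for USTM with a (δₖ,0)-inexact oracle (Lemma 3 of the paper):
`Φ(tᵏ) + h(tᵏ) ≤ (1/Aₖ)φₖ(t) − (1/(2Aₖ))‖t − uᵏ‖² + 3ε/4` for all `t ∈ dom h`. -/
theorem stmt8 {E : Type*} [NormedAddCommGroup E] [InnerProductSpace ℝ E]
    (D : Set E) (h : E → ℝ) (hh : ConvexOn ℝ D h)
    (Φ : E → ℝ) (hΦ : ConvexOn ℝ D Φ)
    (ε : ℝ) (hε : 0 < ε)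
    (Φt : E → ℝ) (g : E → E)  -- inexact oracle Φ̃, ∇̃Φ
    (α A L : ℕ → ℝ) (tseq useq yseq : ℕ → E) (t0 : E)
    (φ : ℕ → E → ℝ)
    (hA0 : A 0 = 0) (hAs : ∀ k, A (k + 1) = A k + α (k + 1))
    (hαpos : ∀ k, 0 < α (k + 1)) (hLpos : ∀ k, 0 < L (k + 1))
    (hαL : ∀ k, L (k + 1) * α (k + 1) ^ 2 = A (k + 1))
    (ht0 : tseq 0 = t0) (hu0 : useq 0 = t0)
    (hφ0 : ∀ t, φ 0 t = (1 / 2) * ‖t - t0‖ ^ 2)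
    (hφs : ∀ k t, φ (k + 1) t = φ k t +
        α (k + 1) * (Φt (yseq (k + 1)) +
          (inner ℝ (g (yseq (k + 1))) (t - yseq (k + 1)) : ℝ) + h t))
    (hy : ∀ k, yseq (k + 1) = (A (k + 1))⁻¹ • (α (k + 1) • useq k + A k • tseq k))
    (ht : ∀ k, tseq (k + 1) = (A (k + 1))⁻¹ • (α (k + 1) • useq (k + 1) + A k • tseq k))
    (hu : ∀ k, useq (k + 1) ∈ D ∧ ∀ t ∈ D, φ (k + 1) (useq (k + 1)) ≤ φ (k + 1) t)
    -- (δₖ,0)-inexact oracle with δₖ = α_{k+1} ε / (4 A_{k+1})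
    (horacle : ∀ k, ∀ t ∈ D, ∀ t' ∈ D,
        Φ t' ≤ Φt t' + α (k + 1) * ε / (4 * A (k + 1)) ∧
        Φt t + (inner ℝ (g t) (t' - t) : ℝ) ≤ Φ t')
    -- inner stopping criterion
    (hstop : ∀ k, Φt (tseq (k + 1)) ≤ Φt (yseq (k + 1)) +
        (inner ℝ (g (yseq (k + 1))) (tseq (k + 1) - yseq (k + 1)) : ℝ) +
        L (k + 1) / 2 * ‖tseq (k + 1) - yseq (k + 1)‖ ^ 2 +
        α (k + 1) / (2 * A (k + 1)) * ε)
    (htD : ∀ k, tseq k ∈ D) (hyD : ∀ k, yseq (k + 1) ∈ D) :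
    ∀ k : ℕ, 0 < k → ∀ t ∈ D,
      Φ (tseq k) + h (tseq k) ≤
        (1 / A k) * φ k t - (1 / (2 * A k)) * ‖t - useq k‖ ^ 2 + 3 * ε / 4 :=
  stmt8_general D h hh Φ ε Φt g α A L tseq useq yseq t0 φ hA0 hAs hαpos hαL ht0 hu0 hφ0 hφs hy ht hu
    horacle hstop htD hyD
end
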